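/- For integers n ≥ r ≥ 1 and l ≥ 1, the number of l-tuples (π₁,…,π_l) of set partitions of {1,…,n} into exactly k blocks, such that the elements 1,…,r lie in r distinct blocks in each π_i and all π_i have the same set of block minima, equals the (l,r)-Stirling number of the second kind S2(n,k) defined by the recurrence. -/

import Mathlib

/-- The `(l,r)`-Stirling numbers of the second kind. -/
def S2 (l r : ℕ) : ℕ → ℕ → ℕ
  | n, k =>
    if _h1 : n < r then 0
    else if _h2 : n = r then (if k = r then 1 else 0)
    else S2 l r (n - 1) (k - 1) + k ^ l * S2 l r (n - 1) k
termination_by n _ => n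
decreasing_by all_goals omega

/-! Sending every element to the least element of its block identifies a partition of `s` whose
set of block minima is `M` with an arbitrary choice, for each `x ∈ s \ M`, of some `m ∈ M` with
`m < x`. So there are `∏_{x ∈ s \ M} #{m ∈ M | m < x}` such partitions, and the tuples to be
counted number `∑_M (∏_{x ∈ [n] \ M} #{m ∈ M | m < x}) ^ l`, over the `k`-sets
`{1, …, r} ⊆ M ⊆ [n]`. Splitting this sum according to whether `n + 1 ∈ M` gives the recurrence
of `S2`: adding the new minimum `n + 1` to `M` leaves the product unchanged, while adding the
non-minimum `n + 1` to `[n]` multiplies it by `#M = k`. -/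

open Finset

section minimaWeight

variable {α : Type*} [LinearOrder α] {s M : Finset α} {a : α}

variable (s M) in
def minimaWeight : ℕ :=
  ∏ x ∈ s \ M, #{m ∈ M | m < x}

lemma minimaWeight_insert_insert (ha : ∀ x ∈ s, x < a) :
    minimaWeight (insert a s) (insert a M) = minimaWeight s M := by
  rw [minimaWeight, minimaWeight, insert_sdiff_insert, sdiff_insert_of_notMem fun h ↦
    (ha a h).false]
  refine prod_congr rfl fun x hx ↦ ?_
  rw [filter_insert, if_neg (ha x (mem_sdiff.1 hx).1).asymm]

lemma minimaWeight_insert (ha : ∀ x ∈ s, x < a) (hM : M ⊆ s) :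
    minimaWeight (insert a s) M = #M * minimaWeight s M := by
  have has : a ∉ s := fun h ↦ (ha a h).false
  rw [minimaWeight, insert_sdiff_of_notMem _ fun h ↦ has (hM h),
    prod_insert fun h ↦ has (mem_sdiff.1 h).1, filter_true_of_mem fun m hm ↦ ha m (hM hm)]
  rfl

end minimaWeight

namespace Finpartition

variable {α : Type*} [LinearOrder α] {s : Finset α} (P : Finpartition s) {x y : α}

def root (x : α) : α :=
  if h : x ∈ s then (P.part x).min' (P.part_nonempty.2 h) else x

def minima : Finset α := {x ∈ s | P.root x = x}

lemma root_mem_part (hx : x ∈ s) : P.root x ∈ P.part x := by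
  simpa only [root, dif_pos hx] using min'_mem _ _

lemma root_le_of_mem_part (hy : y ∈ P.part x) : P.root x ≤ y := by
  have hx : x ∈ s := P.part_nonempty.1 ⟨y, hy⟩
  simpa only [root, dif_pos hx] using min'_le _ _ hy

lemma root_le (x : α) : P.root x ≤ x := by
  by_cases hx : x ∈ s
  · exact P.root_le_of_mem_part (P.mem_part hx)
  · simp [root, hx]

lemma root_mem (hx : x ∈ s) : P.root x ∈ s :=
  P.part_subset x (P.root_mem_part hx)

lemma root_eq_root_iff (hx : x ∈ s) (hy : y ∈ s) : P.root x = P.root y ↔ y ∈ P.part x := by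
  rw [P.mem_part_iff_part_eq_part hy hx]
  refine ⟨fun h ↦ ?_, fun h ↦ by simp only [root, dif_pos hx, dif_pos hy, h]⟩
  refine P.eq_of_mem_parts (P.part_mem.2 hy) (P.part_mem.2 hx) ?_ (P.root_mem_part hx)
  exact h ▸ P.root_mem_part hy

lemma root_root (x : α) : P.root (P.root x) = P.root x := by
  by_cases hx : x ∈ s
  · exact (P.root_eq_root_iff (P.root_mem hx) hx).2 <|
      (P.mem_part_iff_part_eq_part hx (P.root_mem hx)).2
        (P.part_eq_of_mem (P.part_mem.2 hx) (P.root_mem_part hx)).symm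
  · simp [root, hx]

lemma mem_minima : x ∈ P.minima ↔ x ∈ s ∧ P.root x = x := mem_filter

lemma root_mem_minima (hx : x ∈ s) : P.root x ∈ P.minima :=
  P.mem_minima.2 ⟨P.root_mem hx, P.root_root x⟩

lemma min_part (hx : x ∈ s) : (P.part x).min = P.root x := by
  simp only [root, dif_pos hx, coe_min']

lemma image_min_parts : P.parts.image Finset.min = P.minima.image (↑) := by
  ext m
  simp only [mem_image, mem_minima]
  constructor
  · rintro ⟨t, ht, rfl⟩
    obtain ⟨x, hxt⟩ := P.nonempty_of_mem_parts ht
    have hx : x ∈ s := P.le ht hxt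
    refine ⟨P.root x, ⟨P.root_mem hx, P.root_root x⟩, ?_⟩
    rw [← P.part_eq_of_mem ht hxt, P.min_part hx]
  · rintro ⟨x, ⟨hx, hroot⟩, rfl⟩
    exact ⟨P.part x, P.part_mem.2 hx, by rw [P.min_part hx, hroot]⟩

lemma card_minima : #P.minima = #P.parts := by
  refine card_nbij P.part (fun x hx ↦ P.part_mem.2 (P.mem_minima.1 hx).1) ?_ ?_
  · intro x hx y hy hxy
    obtain ⟨hx, hxx⟩ := P.mem_minima.1 hx
    obtain ⟨hy, hyy⟩ := P.mem_minima.1 hy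
    rw [← hxx, ← hyy, P.root_eq_root_iff hx hy, hxy]
    exact P.mem_part hy
  · intro t ht
    obtain ⟨x, hxt⟩ := P.nonempty_of_mem_parts ht
    have hx : x ∈ s := P.le ht hxt
    refine ⟨P.root x, P.root_mem_minima hx, ?_⟩
    rw [← P.part_eq_of_mem ht hxt]
    exact (P.mem_part_iff_part_eq_part (P.root_mem hx) hx).1 (P.root_mem_part hx)

lemma separates_iff_subset_minima {T : Finset α}
    (hT : ∀ x ∈ T, x ∈ s ∧ ∀ y ∈ s, y ≤ x → y ∈ T) :
    (∀ j₁ ∈ T, ∀ j₂ ∈ T, j₁ ≠ j₂ → ∀ b ∈ P.parts, j₁ ∈ b → j₂ ∉ b) ↔ T ⊆ P.minima := by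
  refine ⟨fun h j hj ↦ ?_, fun h j₁ hj₁ j₂ hj₂ hne b hb h₁ h₂ ↦ ?_⟩
  · obtain ⟨hjs, hdown⟩ := hT j hj
    refine P.mem_minima.2 ⟨hjs, ?_⟩
    by_contra hne
    exact h _ (hdown _ (P.root_mem hjs) (P.root_le j)) j hj hne (P.part j)
      (P.part_mem.2 hjs) (P.root_mem_part hjs) (P.mem_part hjs)
  · obtain ⟨hj₁s, hroot₁⟩ := P.mem_minima.1 (h hj₁)
    obtain ⟨hj₂s, hroot₂⟩ := P.mem_minima.1 (h hj₂)
    refine hne ?_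
    rw [← hroot₁, ← hroot₂, P.root_eq_root_iff hj₁s hj₂s, P.part_eq_of_mem hb h₁]
    exact h₂

lemma exists_common_minima_iff {ι : Type*} [Nonempty ι] {T : Finset α}
    (hT : ∀ x ∈ T, x ∈ s ∧ ∀ y ∈ s, y ≤ x → y ∈ T) (k : ℕ) (p : ι → Finpartition s) :
    ((∀ i, #(p i).parts = k) ∧
      (∀ i, ∀ j₁ ∈ T, ∀ j₂ ∈ T, j₁ ≠ j₂ → ∀ b ∈ (p i).parts, j₁ ∈ b → j₂ ∉ b) ∧
      (∀ i j, (p i).parts.image Finset.min = (p j).parts.image Finset.min)) ↔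
      ∃ M ∈ {M ∈ s.powerset | #M = k ∧ T ⊆ M}, ∀ i, (p i).minima = M := by
  simp only [← card_minima, separates_iff_subset_minima _ hT, image_min_parts,
    (image_injective WithTop.coe_injective).eq_iff, mem_filter, mem_powerset]
  constructor
  · rintro ⟨hk, hTmin, heq⟩
    let i₀ := Classical.arbitrary ι
    exact ⟨(p i₀).minima, ⟨filter_subset _ _, hk i₀, hTmin i₀⟩, fun i ↦ heq i i₀⟩
  · rintro ⟨M, ⟨-, hk, hTM⟩, hp⟩
    exact ⟨fun i ↦ hp i ▸ hk, fun i ↦ hp i ▸ hTM, fun i j ↦ (hp i).trans (hp j).symm⟩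

variable (s) in
def ofRoots (ρ : α → α) : Finpartition s :=
  letI : DecidableRel (Setoid.ker ρ) := fun a b ↦ decEq (ρ a) (ρ b)
  ofSetSetoid (Setoid.ker ρ) s

lemma mem_part_ofRoots {ρ : α → α} : y ∈ (ofRoots s ρ).part x ↔ x ∈ s ∧ y ∈ s ∧ ρ x = ρ y :=
  letI : DecidableRel (Setoid.ker ρ) := fun a b ↦ decEq (ρ a) (ρ b)
  mem_part_ofSetSetoid_iff_rel s

lemma root_ofRoots {ρ : α → α} (hρs : ∀ x ∈ s, ρ x ∈ s) (hρρ : ∀ x ∈ s, ρ (ρ x) = ρ x)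
    (hρle : ∀ x, ρ x ≤ x) (hx : x ∈ s) : (ofRoots s ρ).root x = ρ x := by
  refine le_antisymm ((ofRoots s ρ).root_le_of_mem_part ?_) ?_
  · exact mem_part_ofRoots.2 ⟨hx, hρs x hx, (hρρ x hx).symm⟩
  · obtain ⟨-, -, h⟩ := mem_part_ofRoots.1 ((ofRoots s ρ).root_mem_part hx)
    exact h ▸ hρle _

lemma ext_part {Q : Finpartition s} (h : ∀ x ∈ s, P.part x = Q.part x) : P = Q := by
  ext t
  refine ⟨fun ht ↦ ?_, fun ht ↦ ?_⟩
  · obtain ⟨x, hx, rfl⟩ := P.part_surjOn ht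
    exact h x hx ▸ Q.part_mem.2 hx
  · obtain ⟨x, hx, rfl⟩ := Q.part_surjOn ht
    exact h x hx ▸ P.part_mem.2 hx

lemma ofRoots_eq {ρ : α → α} (h : ∀ x ∈ s, ρ x = P.root x) : ofRoots s ρ = P := by
  refine ext_part _ fun x hx ↦ ?_
  ext y
  rw [mem_part_ofRoots]
  constructor
  · rintro ⟨-, hy, hρ⟩
    rwa [h x hx, h y hy, P.root_eq_root_iff hx hy] at hρ
  · intro hy
    have hy' : y ∈ s := P.part_subset x hy
    rw [h x hx, h y hy', P.root_eq_root_iff hx hy']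
    exact ⟨hx, hy', hy⟩

section MinimaFiber

variable {M : Finset α} (g : (x : ↥(s \ M)) → ↥{m ∈ M | m < x.1})

def extendRoots (x : α) : α :=
  if h : x ∈ s \ M then g ⟨x, h⟩ else x

lemma extendRoots_of_mem_sdiff (h : x ∈ s \ M) :
    extendRoots g x ∈ M ∧ extendRoots g x < x := by
  simpa only [extendRoots, dif_pos h] using mem_filter.1 (g ⟨x, h⟩).2

lemma extendRoots_of_notMem_sdiff (h : x ∉ s \ M) : extendRoots g x = x := dif_neg h

lemma extendRoots_extendRoots (x : α) : extendRoots g (extendRoots g x) = extendRoots g x := by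
  by_cases h : x ∈ s \ M
  · exact extendRoots_of_notMem_sdiff g fun h' ↦
      (mem_sdiff.1 h').2 (extendRoots_of_mem_sdiff g h).1
  · rw [extendRoots_of_notMem_sdiff g h, extendRoots_of_notMem_sdiff g h]

lemma extendRoots_le (x : α) : extendRoots g x ≤ x := by
  by_cases h : x ∈ s \ M
  · exact (extendRoots_of_mem_sdiff g h).2.le
  · exact (extendRoots_of_notMem_sdiff g h).le

lemma root_ofRoots_extendRoots (hM : M ⊆ s) (hx : x ∈ s) :
    (ofRoots s (extendRoots g)).root x = extendRoots g x := by
  refine root_ofRoots (fun y hy ↦ ?_) (fun y _ ↦ extendRoots_extendRoots g y)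
    (extendRoots_le g) hx
  by_cases h : y ∈ s \ M
  · exact hM (extendRoots_of_mem_sdiff g h).1
  · rwa [extendRoots_of_notMem_sdiff g h]

lemma minima_ofRoots_extendRoots (hM : M ⊆ s) : (ofRoots s (extendRoots g)).minima = M := by
  ext x
  rw [mem_minima]
  refine ⟨fun ⟨hx, hroot⟩ ↦ ?_, fun hx ↦ ⟨hM hx, ?_⟩⟩
  · rw [root_ofRoots_extendRoots g hM hx] at hroot
    by_contra hxM
    exact (extendRoots_of_mem_sdiff g (mem_sdiff.2 ⟨hx, hxM⟩)).2.ne hroot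
  · rw [root_ofRoots_extendRoots g hM (hM hx)]
    exact extendRoots_of_notMem_sdiff g fun h ↦ (mem_sdiff.1 h).2 hx

lemma root_mem_filter_lt {P : Finpartition s} (hP : P.minima = M) (x : ↥(s \ M)) :
    P.root x ∈ ({m ∈ M | m < x.1} : Finset α) := by
  subst hP
  obtain ⟨hxs, hxM⟩ := mem_sdiff.1 x.2
  exact mem_filter.2 ⟨P.root_mem_minima hxs,
    (P.root_le x).lt_of_ne fun h ↦ hxM (P.mem_minima.2 ⟨hxs, h⟩)⟩

def minimaFiberEquiv (hM : M ⊆ s) :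
    {P : Finpartition s // P.minima = M} ≃ ((x : ↥(s \ M)) → ↥{m ∈ M | m < x.1}) where
  toFun P x := ⟨P.1.root x, root_mem_filter_lt P.2 x⟩
  invFun g := ⟨ofRoots s (extendRoots g), minima_ofRoots_extendRoots g hM⟩
  left_inv P := by
    refine Subtype.ext (ofRoots_eq _ fun x hx ↦ ?_)
    by_cases h : x ∈ s \ M
    · simp only [extendRoots, dif_pos h]
    · rw [extendRoots_of_notMem_sdiff _ h]
      refine ((P.1.mem_minima.1 ?_).2).symm
      rw [P.2]
      by_contra hxM
      exact h (mem_sdiff.2 ⟨hx, hxM⟩)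
  right_inv g := by
    funext x
    refine Subtype.ext ?_
    dsimp only
    rw [root_ofRoots_extendRoots g hM (mem_sdiff.1 x.2).1]
    simp only [extendRoots, dif_pos x.2]

end MinimaFiber

theorem card_minima_eq {M : Finset α} (hM : M ⊆ s) :
    Nat.card {P : Finpartition s // P.minima = M} = minimaWeight s M := by
  rw [Nat.card_congr (minimaFiberEquiv hM), Nat.card_pi, minimaWeight]
  simp only [Nat.card_eq_fintype_card, Fintype.card_coe]
  exact prod_coe_sort (s \ M) fun x ↦ #{m ∈ M | m < x}

end Finpartition

lemma card_exists_forall_eq {ι X Y : Type*} [Fintype ι] [Nonempty ι] [Finite X]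
    (f : X → Y) (T : Finset Y) :
    Nat.card {p : ι → X // ∃ y ∈ T, ∀ i, f (p i) = y} =
      ∑ y ∈ T, Nat.card {x // f x = y} ^ Fintype.card ι := by
  classical
  have := Fintype.ofFinite X
  have hfilter : ({p | ∃ y ∈ T, ∀ i, f (p i) = y} : Finset (ι → X)) =
      T.biUnion fun y ↦ Fintype.piFinset fun _ ↦ {x | f x = y} := by
    ext p
    simp only [mem_filter, mem_univ, true_and, mem_biUnion, Fintype.mem_piFinset]
  rw [Nat.card_eq_fintype_card, Fintype.card_subtype, hfilter, card_biUnion]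
  · simp only [Fintype.card_piFinset, prod_const, card_univ, Nat.card_eq_fintype_card,
      Fintype.card_subtype]
  · intro y _ y' _ hne
    refine disjoint_left.2 fun p hp hp' ↦ hne ?_
    simp only [Fintype.mem_piFinset, mem_filter, mem_univ, true_and] at hp hp'
    exact (hp (Classical.arbitrary ι)).symm.trans (hp' _)

def stirlingSum (l r n k : ℕ) : ℕ :=
  ∑ M ∈ (Icc 1 n).powerset with #M = k ∧ Icc 1 r ⊆ M, minimaWeight (Icc 1 n) M ^ l

lemma stirlingSum_self (l r k : ℕ) : stirlingSum l r r k = if k = r then 1 else 0 := by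
  rw [stirlingSum, sum_filter, sum_eq_single_of_mem (Icc 1 r) (mem_powerset_self _)]
  · simp [minimaWeight, eq_comm]
  · intro M hM hne
    rw [if_neg]
    rintro ⟨-, h⟩
    exact hne (subset_antisymm (mem_powerset.1 hM) h)

lemma stirlingSum_succ {l r n : ℕ} (k : ℕ) (hr : 1 ≤ r) (hn : r ≤ n) :
    stirlingSum l r (n + 1) k = stirlingSum l r n (k - 1) + k ^ l * stirlingSum l r n k := by
  have hlt : ∀ x ∈ Icc 1 n, x < n + 1 := fun x hx ↦ Nat.lt_succ_of_le (mem_Icc.1 hx).2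
  have hnot : n + 1 ∉ Icc 1 n := fun h ↦ (hlt _ h).false
  rw [stirlingSum, ← insert_Icc_right_eq_Icc_add_one (by omega), sum_filter,
    sum_powerset_insert hnot, add_comm, stirlingSum, stirlingSum, sum_filter, sum_filter,
    mul_sum]
  congr 1
  · refine sum_congr rfl fun M hM ↦ ?_
    have hM : n + 1 ∉ M := fun h ↦ hnot (mem_powerset.1 hM h)
    rw [minimaWeight_insert_insert hlt, card_insert_of_notMem hM]
    refine if_congr ?_ rfl rfl
    rw [subset_insert_iff_of_notMem fun h ↦ by simp only [mem_Icc] at h; omega]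
    refine and_congr_left fun hrM ↦ ?_
    have := card_le_card hrM
    rw [Nat.card_Icc] at this
    omega
  · refine sum_congr rfl fun M hM ↦ ?_
    rw [minimaWeight_insert hlt (mem_powerset.1 hM)]
    split_ifs with h
    · rw [h.1, mul_pow]
    · rw [mul_zero]

theorem stirlingSum_eq_S2 {l r n : ℕ} (k : ℕ) (hr : 1 ≤ r) (hn : r ≤ n) :
    stirlingSum l r n k = S2 l r n k := by
  induction n, hn using Nat.le_induction generalizing k with
  | base => rw [stirlingSum_self, S2]; simp
  | succ n hn ih =>
    rw [stirlingSum_succ k hr hn, ih, ih, S2.eq_1 l r (n + 1), dif_neg (by omega),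
      dif_neg (by omega), Nat.add_sub_cancel]

theorem stmt19 (l r n k : ℕ) (hr : 1 ≤ r) (hn : r ≤ n) (hl : 1 ≤ l) :
    Nat.card {p : Fin l → Finpartition (Finset.Icc 1 n) //
      (∀ i, (p i).parts.card = k) ∧
      (∀ i, ∀ j₁ ∈ Finset.Icc 1 r, ∀ j₂ ∈ Finset.Icc 1 r, j₁ ≠ j₂ →
        ∀ b ∈ (p i).parts, j₁ ∈ b → j₂ ∉ b) ∧
      (∀ i j : Fin l, (p i).parts.image Finset.min = (p j).parts.image Finset.min)} =
      S2 l r n k := by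
  have : Nonempty (Fin l) := ⟨⟨0, hl⟩⟩
  have hr_lower : ∀ x ∈ Icc 1 r, x ∈ Icc 1 n ∧ ∀ y ∈ Icc 1 n, y ≤ x → y ∈ Icc 1 r := by
    intro x hx
    simp only [mem_Icc] at hx ⊢
    exact ⟨by omega, fun y hy _ ↦ by omega⟩
  simp only [Finpartition.exists_common_minima_iff hr_lower]
  rw [card_exists_forall_eq, ← stirlingSum_eq_S2 k hr hn, stirlingSum, Fintype.card_fin]
  refine sum_congr rfl fun M hM ↦ ?_
  rw [Finpartition.card_minima_eq (mem_powerset.1 (mem_filter.1 hM).1)]
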